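/- arXiv:1909.03371 — 9 statements merged into one kernel-verified Lean document; each statement's English description precedes it below -/
import Mathlib

section
/- Let a, b ∈ ℝⁿ, θ ∈ (0,1), c = (1−θ)a + θb, and δ ∈ (0, θ). Then b + cone(b − B(a, δ)) ⊆ c + cone(c − B(a, δ)), where b − B(a, δ) denotes the set {b − x : x ∈ B(a, δ)} and similarly for c. -/
/-!
Write a point of the first cone as `y = b + t • (b - x)` with `x ∈ B(a, δ)`, and look for it as
`y = c + s • (c - x')` with `x' = a + μ • (x - a)` on the segment `[a, x]`. Since `c` is the convex
combination `(1 - θ) • a + θ • b`, comparing coefficients gives `(1 + s) θ = 1 + t` and `s μ = t`.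
Then `θ ≤ 1` forces `t ≤ s`, i.e. `μ ≤ 1`, so `x'` lies in the ball, which is star-convex about its
centre.
-/

open Set Metric

variable {E : Type*} [AddCommGroup E] [Module ℝ E]

/-- `p + cone (p - A)`, with `cone` the conic hull. -/
def apexCone (p : E) (A : Set E) : Set E :=
  (fun z => p + z) '' {y | ∃ t : ℝ, 0 ≤ t ∧ ∃ x ∈ A, y = t • (p - x)}

theorem add_smul_sub_eq_convexCombination_add_smul_sub (a b x : E) {θ s t μ : ℝ}
    (hs : (1 + s) * θ = 1 + t) (hμ : s * μ = t) :
    b + t • (b - x) =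
      ((1 - θ) • a + θ • b) + s • (((1 - θ) • a + θ • b) - (a + μ • (x - a))) := by
  match_scalars
  · linear_combination -hs
  · linear_combination hμ
  · linear_combination hs - hμ

theorem apexCone_subset_apexCone_of_starConvex {A : Set E} {a b : E} (hA : StarConvex ℝ a A)
    {θ : ℝ} (hθ : θ ∈ Ioc 0 1) : apexCone b A ⊆ apexCone ((1 - θ) • a + θ • b) A := by
  obtain ⟨hθ0, hθ1⟩ := hθ
  rintro _ ⟨_, ⟨t, ht, x, hx, rfl⟩, rfl⟩
  obtain ⟨s, hs⟩ : ∃ s : ℝ, (1 + s) * θ = 1 + t :=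
    ⟨(1 + t) / θ - 1, by rw [add_sub_cancel, div_mul_cancel₀ _ hθ0.ne']⟩
  have hts : t ≤ s := by nlinarith
  have hμ : s * (t / s) = t := by rw [mul_comm]; exact div_mul_cancel_of_imp fun h => by linarith
  have hμ_mem : t / s ∈ Icc (0 : ℝ) 1 :=
    ⟨div_nonneg ht (ht.trans hts), div_le_one_of_le₀ hts (ht.trans hts)⟩
  exact ⟨_, ⟨s, ht.trans hts, _, hA.add_smul_sub_mem hx hμ_mem.1 hμ_mem.2, rfl⟩,
    (add_smul_sub_eq_convexCombination_add_smul_sub a b x hs hμ).symm⟩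

theorem starConvex_ball_self {F : Type*} [SeminormedAddCommGroup F] [NormedSpace ℝ F]
    (a : F) (δ : ℝ) : StarConvex ℝ a (ball a δ) := by
  rcases le_or_gt δ 0 with hδ | hδ
  · rw [ball_eq_empty.mpr hδ]
    exact starConvex_empty a
  · exact (convex_ball a δ).starConvex (mem_ball_self hδ)

theorem statement_1_general (n : ℕ)
    (a b : EuclideanSpace ℝ (Fin n)) (θ : ℝ) (hθ : θ ∈ Set.Ioo (0:ℝ) 1)
    (c : EuclideanSpace ℝ (Fin n)) (hc : c = (1 - θ) • a + θ • b)
    (δ : ℝ) :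
    (fun z => b + z) '' {y | ∃ t : ℝ, 0 ≤ t ∧ ∃ x ∈ Metric.ball a δ, y = t • (b - x)} ⊆
      (fun z => c + z) '' {y | ∃ t : ℝ, 0 ≤ t ∧ ∃ x ∈ Metric.ball a δ, y = t • (c - x)} := by
  subst hc
  exact apexCone_subset_apexCone_of_starConvex (starConvex_ball_self a δ)
    (Ioo_subset_Ioc_self hθ)

/-- for a, b ∈ ℝⁿ, θ ∈ (0,1), c = (1−θ)a + θb, δ ∈ (0,θ),
b + cone(b − B(a,δ)) ⊆ c + cone(c − B(a,δ)). -/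
theorem statement_1 (n : ℕ) (hn : 1 ≤ n)
    (a b : EuclideanSpace ℝ (Fin n)) (θ : ℝ) (hθ : θ ∈ Set.Ioo (0:ℝ) 1)
    (c : EuclideanSpace ℝ (Fin n)) (hc : c = (1 - θ) • a + θ • b)
    (δ : ℝ) (hδ : δ ∈ Set.Ioo 0 θ) :
    (fun z => b + z) '' {y | ∃ t : ℝ, 0 ≤ t ∧ ∃ x ∈ Metric.ball a δ, y = t • (b - x)} ⊆
      (fun z => c + z) '' {y | ∃ t : ℝ, 0 ≤ t ∧ ∃ x ∈ Metric.ball a δ, y = t • (c - x)} :=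
  statement_1_general n a b θ hθ c hc δ
end

section
/- Let ρ : [0,1] → dom f be a searching path via regularization with penalty ψ and tuner λ, and let t₁, t₂ ∈ [0,1]. If f(ρ(t₁)) = f(ρ(t₂)), then ψ(ρ(t₁)) = ψ(ρ(t₂)). -/
open scoped RealInnerProductSpace

/-- along a path via regularization, equal f-values force equal ψ-values. -/
theorem statement_2 (n : ℕ) (hn : 1 ≤ n)
    (f : EuclideanSpace ℝ (Fin n) → EReal)
    -- f is convex
    (hf_conv : ∀ x y : EuclideanSpace ℝ (Fin n), ∀ a b : ℝ, 0 ≤ a → 0 ≤ b → a + b = 1 →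
      f (a • x + b • y) ≤ (a : EReal) * f x + (b : EReal) * f y)
    -- f is proper: never −∞ and finite somewhere
    (hf_nebot : ∀ x, f x ≠ ⊥)
    (hf_proper : ∃ x, f x ≠ ⊤)
    -- the set of minimizers of f is nonempty
    (hf_argmin : ∃ x, ∀ y, f x ≤ f y)
    -- the effective domain of f is open
    (hf_domopen : IsOpen {x : EuclideanSpace ℝ (Fin n) | f x ≠ ⊤})
    -- ψ is a finite-valued convex function
    (ψ : EuclideanSpace ℝ (Fin n) → ℝ) (hψ_conv : ConvexOn ℝ Set.univ ψ)
    -- ρ is a searching path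
    (ρ : ℝ → EuclideanSpace ℝ (Fin n))
    (hρ_cont : ContinuousOn ρ (Set.Icc 0 1))
    (hρ_dom : ∀ t ∈ Set.Icc (0:ℝ) 1, f (ρ t) ≠ ⊤)
    -- λ is positive-valued
    (lam : ℝ → ℝ) (hlam : ∀ t ∈ Set.Icc (0:ℝ) 1, 0 < lam t)
    -- ρ is via regularization: for every t ∈ [0,1], ρ(t) minimizes f + λ(t)·ψ
    (hreg : ∀ t ∈ Set.Icc (0:ℝ) 1, ∀ y,
      f (ρ t) + ((lam t * ψ (ρ t) : ℝ) : EReal) ≤ f y + ((lam t * ψ y : ℝ) : EReal)) :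
    ∀ t₁ ∈ Set.Icc (0:ℝ) 1, ∀ t₂ ∈ Set.Icc (0:ℝ) 1,
      f (ρ t₁) = f (ρ t₂) → ψ (ρ t₁) = ψ (ρ t₂) := by
  have key : ∀ t ∈ Set.Icc (0:ℝ) 1, ∀ s ∈ Set.Icc (0:ℝ) 1,
      f (ρ t) = f (ρ s) → ψ (ρ t) ≤ ψ (ρ s) := by
    intro t ht s hs hfs
    obtain ⟨r, hr⟩ : ∃ r : ℝ, f (ρ t) = (r : EReal) := by
      lift f (ρ t) to ℝ using ⟨hρ_dom t ht, hf_nebot _⟩ with r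
      exact ⟨r, rfl⟩
    have h := hreg t ht (ρ s)
    rw [hr, ← hfs, hr] at h
    have h2 : lam t * ψ (ρ t) ≤ lam t * ψ (ρ s) := by
      have := (EReal.addLECancellable_coe r) h
      exact_mod_cast this
    exact le_of_mul_le_mul_left h2 (hlam t ht)
  intro t₁ h₁ t₂ h₂ hf
  exact le_antisymm (key t₁ h₁ t₂ h₂ hf) (key t₂ h₂ t₁ h₁ hf.symm)
end

section
/- Let ρ : [0,1] → dom f be a searching path via regularization with penalty ψ and tuner λ, and let t₁, t₂ ∈ [0,1]. If f(ρ(t₁)) > f(ρ(t₂)), then ψ(ρ(t₁)) < ψ(ρ(t₂)) and ρ(t₁) lies in the interior of the upper region U⁺_f(ρ(t₂)). -/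
open scoped RealInnerProductSpace
open Set

/-!
At `t₁`, comparing `ρ t₁` with `ρ t₂` in the regularized objective, the strict gap
`f (ρ t₂) < f (ρ t₁)` forces `ψ (ρ t₁) < ψ (ρ t₂)`.

At `t₂`, `x₀ = ρ t₂` minimizes `f + λ ψ` with `λ = lam t₂`. Separating the epigraph of `f`
from the strict hypograph of the concave function `f x₀ + λ ψ x₀ - λ ψ`, which is open because
`ψ` is continuous, yields a subgradient `x*` of `f` at `x₀` with
`⟪x*, z - x₀⟫ ≥ λ (ψ x₀ - ψ z)` for all `z` (the sum rule `0 ∈ ∂f x₀ + λ ∂ψ x₀`).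
At `z = ρ t₁` the right side is positive, so the open half-space `{y | 0 < ⟪x*, y - x₀⟫}` is a
neighbourhood of `ρ t₁` contained in the upper region.
-/

theorem StrongDual.apply_mk_eq_add_mul {E : Type*} [TopologicalSpace E] [AddCommGroup E]
    [Module ℝ E] (L : StrongDual ℝ (E × ℝ)) (z : E) (r : ℝ) :
    L (z, r) = L (z, 0) + r * L (0, 1) := by
  rw [← smul_eq_mul, ← map_smul, ← map_add, Prod.smul_mk, smul_zero, smul_eq_mul, mul_one,
    Prod.mk_add_mk, add_zero, zero_add]

theorem ConvexOn.exists_subgradient_of_isMinOn_add {E : Type*} [TopologicalSpace E]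
    [AddCommGroup E] [Module ℝ E] [IsTopologicalAddGroup E] [ContinuousSMul ℝ E]
    {s : Set E} {g h : E → ℝ} {x₀ : E} (hg : ConvexOn ℝ s g) (hh : ConvexOn ℝ univ h)
    (hh_cont : Continuous h) (hx₀ : x₀ ∈ s) (hmin : IsMinOn (g + h) s x₀) :
    ∃ φ : StrongDual ℝ E, (∀ z ∈ s, g x₀ + φ (z - x₀) ≤ g z) ∧ ∀ z, h x₀ - φ (z - x₀) ≤ h z := by
  set k : E → ℝ := -h + fun _ => g x₀ + h x₀
  have hk : ConcaveOn ℝ univ k := hh.neg.add_const _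
  set A : Set (E × ℝ) := {p | p.1 ∈ univ ∧ p.2 < k p.1}
  set B : Set (E × ℝ) := {p | p.1 ∈ s ∧ g p.1 ≤ p.2}
  have hA_open : IsOpen A := by
    simp only [A, mem_univ, true_and]
    exact isOpen_lt continuous_snd (by fun_prop)
  have hdisj : Disjoint A B := by
    refine disjoint_left.2 fun p ⟨_, hpk⟩ ⟨hps, hpg⟩ => ?_
    have hp_min := isMinOn_iff.1 hmin p.1 hps
    simp only [k, Pi.add_apply, Pi.neg_apply] at hp_min hpk
    linarith
  obtain ⟨L, u, hLA, hLB⟩ :=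
    geometric_hahn_banach_open hk.convex_strict_hypograph hA_open hg.convex_epigraph hdisj
  set T : StrongDual ℝ E := L.comp (ContinuousLinearMap.inl ℝ E ℝ)
  set c := L (0, 1)
  have hL (z : E) (r : ℝ) : L (z, r) = T z + r * c := L.apply_mk_eq_add_mul z r
  have hB (z : E) (hz : z ∈ s) : u ≤ T z + g z * c := hL z _ ▸ hLB (z, g z) ⟨hz, le_rfl⟩
  have hA (z : E) (r : ℝ) (hr : r < k z) : T z + r * c < u := hL z r ▸ hLA (z, r) ⟨trivial, hr⟩
  have hkx₀ : k x₀ = g x₀ := by simp [k]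
  -- the hyperplane separates `(x₀, g x₀ - 1) ∈ A` from `(x₀, g x₀) ∈ B`, so it is not vertical
  have hc : 0 < c := by
    have := hA x₀ (g x₀ - 1) (by linarith)
    linarith [hB x₀ hx₀]
  have hA_closure (z : E) : T z + k z * c ≤ u := by
    have : k z ≤ (u - T z) / c := le_of_forall_lt fun r hr =>
      (lt_div_iff₀ hc).2 (by linarith [hA z r hr])
    linarith [(le_div_iff₀ hc).1 this]
  have hu : u = T x₀ + g x₀ * c := le_antisymm (hB x₀ hx₀) (hkx₀ ▸ hA_closure x₀)
  have hφ (z : E) : (-c⁻¹ • T) (z - x₀) = (T x₀ - T z) / c := by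
    simp only [smul_apply, map_sub, smul_eq_mul]
    ring
  refine ⟨-c⁻¹ • T, fun z hz => ?_, fun z => ?_⟩
  · have : T x₀ - T z ≤ (g z - g x₀) * c := by linarith [hB z hz]
    linarith [hφ z, (div_le_iff₀ hc).2 this]
  · have : (h x₀ - h z) * c ≤ T x₀ - T z := by
      have := hA_closure z
      simp only [k, Pi.add_apply, Pi.neg_apply] at this
      linarith
    linarith [hφ z, (le_div_iff₀ hc).2 this]

theorem convexOn_toReal_setOf_ne_top {E : Type*} [AddCommGroup E] [Module ℝ E] {f : E → EReal}
    (hf_conv : ∀ x y : E, ∀ a b : ℝ, 0 ≤ a → 0 ≤ b → a + b = 1 →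
      f (a • x + b • y) ≤ (a : EReal) * f x + (b : EReal) * f y)
    (hf_nebot : ∀ x, f x ≠ ⊥) :
    ConvexOn ℝ {x | f x ≠ ⊤} fun x => (f x).toReal := by
  have key {x y : E} (hx : f x ≠ ⊤) (hy : f y ≠ ⊤) {a b : ℝ} (ha : 0 ≤ a) (hb : 0 ≤ b)
      (hab : a + b = 1) :
      f (a • x + b • y) ≤ ((a * (f x).toReal + b * (f y).toReal : ℝ) : EReal) := by
    rw [EReal.coe_add, EReal.coe_mul, EReal.coe_mul, EReal.coe_toReal hx (hf_nebot _),
      EReal.coe_toReal hy (hf_nebot _)]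
    exact hf_conv x y a b ha hb hab
  refine ⟨fun x hx y hy a b ha hb hab => ?_, fun x hx y hy a b ha hb hab => ?_⟩
  · exact ne_top_of_le_ne_top (EReal.coe_ne_top _) (key hx hy ha hb hab)
  · have := key hx hy ha hb hab
    rw [← EReal.coe_toReal (ne_top_of_le_ne_top (EReal.coe_ne_top _) this) (hf_nebot _),
      EReal.coe_le_coe_iff] at this
    simpa only [smul_eq_mul] using this

theorem EReal.lt_of_add_coe_le_add_coe {a b : EReal} {c d : ℝ} (hab : b < a)
    (h : a + c ≤ b + d) : c < d := by
  by_contra! hdc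
  exact (h.trans_lt ((add_le_add_right (EReal.coe_le_coe_iff.2 hdc) b).trans_lt
    (EReal.add_lt_add_right_coe hab c))).false

theorem mem_interior_setOf_exists_inner_nonneg {E : Type*} [NormedAddCommGroup E]
    [InnerProductSpace ℝ E] {P : E → Prop} {x₀ y v : E} (hv : P v) (hy : 0 < ⟪v, y - x₀⟫) :
    y ∈ interior {y | ∃ v, P v ∧ 0 ≤ ⟪v, y - x₀⟫} :=
  mem_interior.2 ⟨{y | 0 < ⟪v, y - x₀⟫}, fun _ hz => ⟨v, hv, hz.le⟩,
    isOpen_lt continuous_const (by fun_prop), hy⟩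

theorem statement_4_general (n : ℕ)
    (f : EuclideanSpace ℝ (Fin n) → EReal)
    -- f is convex
    (hf_conv : ∀ x y : EuclideanSpace ℝ (Fin n), ∀ a b : ℝ, 0 ≤ a → 0 ≤ b → a + b = 1 →
      f (a • x + b • y) ≤ (a : EReal) * f x + (b : EReal) * f y)
    -- f is proper: never −∞ and finite somewhere
    (hf_nebot : ∀ x, f x ≠ ⊥)
    -- ψ is a finite-valued convex function
    (ψ : EuclideanSpace ℝ (Fin n) → ℝ) (hψ_conv : ConvexOn ℝ Set.univ ψ)
    -- ρ is a searching path
    (ρ : ℝ → EuclideanSpace ℝ (Fin n))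
    (hρ_dom : ∀ t ∈ Set.Icc (0:ℝ) 1, f (ρ t) ≠ ⊤)
    -- λ is positive-valued
    (lam : ℝ → ℝ) (hlam : ∀ t ∈ Set.Icc (0:ℝ) 1, 0 < lam t)
    -- ρ is via regularization: for every t ∈ [0,1], ρ(t) minimizes f + λ(t)·ψ
    (hreg : ∀ t ∈ Set.Icc (0:ℝ) 1, ∀ y,
      f (ρ t) + ((lam t * ψ (ρ t) : ℝ) : EReal) ≤ f y + ((lam t * ψ y : ℝ) : EReal)) :
    ∀ t₁ ∈ Set.Icc (0:ℝ) 1, ∀ t₂ ∈ Set.Icc (0:ℝ) 1,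
      f (ρ t₂) < f (ρ t₁) →
        ψ (ρ t₁) < ψ (ρ t₂) ∧
        ρ t₁ ∈ interior {y : EuclideanSpace ℝ (Fin n) |
          ∃ xs : EuclideanSpace ℝ (Fin n), (∀ z, f (ρ t₂) + ((⟪xs, z - ρ t₂⟫ : ℝ) : EReal) ≤ f z) ∧
            0 ≤ ⟪xs, y - ρ t₂⟫} := by
  intro t₁ ht₁ t₂ ht₂ hlt
  have hψ_lt : ψ (ρ t₁) < ψ (ρ t₂) := lt_of_mul_lt_mul_left
    (EReal.lt_of_add_coe_le_add_coe hlt (hreg t₁ ht₁ (ρ t₂))) (hlam t₁ ht₁).le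
  refine ⟨hψ_lt, ?_⟩
  have hmin : IsMinOn ((fun x => (f x).toReal) + fun x => lam t₂ * ψ x) {x | f x ≠ ⊤} (ρ t₂) := by
    intro z hz
    have hz_min := hreg t₂ ht₂ z
    rwa [← EReal.coe_toReal (hρ_dom t₂ ht₂) (hf_nebot _), ← EReal.coe_toReal hz (hf_nebot _),
      ← EReal.coe_add, ← EReal.coe_add, EReal.coe_le_coe_iff] at hz_min
  have hψ_cont : Continuous ψ := continuousOn_univ.1 (hψ_conv.continuousOn isOpen_univ)
  obtain ⟨φ, hφ_f, hφ_ψ⟩ :=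
    (convexOn_toReal_setOf_ne_top hf_conv hf_nebot).exists_subgradient_of_isMinOn_add
      (hψ_conv.smul (hlam t₂ ht₂).le) (continuous_const.mul hψ_cont) (hρ_dom t₂ ht₂) hmin
  set xs := (InnerProductSpace.toDual ℝ (EuclideanSpace ℝ (Fin n))).symm φ
  have hxs (z) : ⟪xs, z⟫ = φ z := InnerProductSpace.toDual_symm_apply
  refine mem_interior_setOf_exists_inner_nonneg (v := xs) (fun z => ?_) ?_
  · by_cases hz : f z = ⊤
    · simp [hz]
    · rw [hxs, ← EReal.coe_toReal (hρ_dom t₂ ht₂) (hf_nebot _),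
        ← EReal.coe_toReal hz (hf_nebot _), ← EReal.coe_add, EReal.coe_le_coe_iff]
      exact hφ_f z hz
  · have hφ_ψ₁ := hφ_ψ (ρ t₁)
    simp only [smul_eq_mul] at hφ_ψ₁
    rw [hxs]
    linarith [mul_lt_mul_of_pos_left hψ_lt (hlam t₂ ht₂)]

/-- strict decrease of f forces strict increase of ψ, and ρ(t₁) lies in the interior of the upper region U⁺_f(ρ(t₂)). -/
theorem statement_4 (n : ℕ) (hn : 1 ≤ n)
    (f : EuclideanSpace ℝ (Fin n) → EReal)
    -- f is convex
    (hf_conv : ∀ x y : EuclideanSpace ℝ (Fin n), ∀ a b : ℝ, 0 ≤ a → 0 ≤ b → a + b = 1 →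
      f (a • x + b • y) ≤ (a : EReal) * f x + (b : EReal) * f y)
    -- f is proper: never −∞ and finite somewhere
    (hf_nebot : ∀ x, f x ≠ ⊥)
    (hf_proper : ∃ x, f x ≠ ⊤)
    -- the set of minimizers of f is nonempty
    (hf_argmin : ∃ x, ∀ y, f x ≤ f y)
    -- the effective domain of f is open
    (hf_domopen : IsOpen {x : EuclideanSpace ℝ (Fin n) | f x ≠ ⊤})
    -- ψ is a finite-valued convex function
    (ψ : EuclideanSpace ℝ (Fin n) → ℝ) (hψ_conv : ConvexOn ℝ Set.univ ψ)
    -- ρ is a searching path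
    (ρ : ℝ → EuclideanSpace ℝ (Fin n))
    (hρ_cont : ContinuousOn ρ (Set.Icc 0 1))
    (hρ_dom : ∀ t ∈ Set.Icc (0:ℝ) 1, f (ρ t) ≠ ⊤)
    -- λ is positive-valued
    (lam : ℝ → ℝ) (hlam : ∀ t ∈ Set.Icc (0:ℝ) 1, 0 < lam t)
    -- ρ is via regularization: for every t ∈ [0,1], ρ(t) minimizes f + λ(t)·ψ
    (hreg : ∀ t ∈ Set.Icc (0:ℝ) 1, ∀ y,
      f (ρ t) + ((lam t * ψ (ρ t) : ℝ) : EReal) ≤ f y + ((lam t * ψ y : ℝ) : EReal)) :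
    ∀ t₁ ∈ Set.Icc (0:ℝ) 1, ∀ t₂ ∈ Set.Icc (0:ℝ) 1,
      f (ρ t₂) < f (ρ t₁) →
        ψ (ρ t₁) < ψ (ρ t₂) ∧
        ρ t₁ ∈ interior {y : EuclideanSpace ℝ (Fin n) |
          ∃ xs : EuclideanSpace ℝ (Fin n), (∀ z, f (ρ t₂) + ((⟪xs, z - ρ t₂⟫ : ℝ) : EReal) ≤ f z) ∧
            0 ≤ ⟪xs, y - ρ t₂⟫} :=
  statement_4_general n f hf_conv hf_nebot ψ hψ_conv ρ hρ_dom lam hlam hreg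
end

section
/- Let D ⊆ ℝⁿ be a compact convex set, a a point of the interior of D, and p, h ∈ ℝ. Let â = (a, p) ∈ ℝⁿ × ℝ, T = {(x, h) : x ∈ D}, and let S = {(1−λ)â + λx̂ : x̂ ∈ rbd T, λ ∈ [0,1]} be the lateral of the truncated cone trunc(â, T). Then Stp(S) < +∞; i.e., there exists M ≥ 0 such that |v' − u'| ≤ M·‖v − u‖ for all (u, u'), (v, v') ∈ S. -/
/-!
Let `g` be the Minkowski gauge of `D` centred at the interior point `a`. It is Lipschitz because
`D` contains a ball around `a`, it equals `1` on the frontier of `D`, and it is positively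
homogeneous. The point `(1 - l) • (a, p) + l • (y, h)` with `y` in the frontier therefore has
`g`-value `l` in its first coordinate and height `p + l * (h - p)`, so the lateral lies in the graph
of the Lipschitz function `x ↦ p + g x * (h - p)`.
-/

open Set Metric Topology Pointwise

def truncatedConeLateral {V : Type*} [AddCommGroup V] [Module ℝ V] [TopologicalSpace V]
    (â : V) (T : Set V) : Set V :=
  {z | ∃ w ∈ intrinsicFrontier ℝ T, ∃ l ∈ Icc (0 : ℝ) 1, z = (1 - l) • â + l • w}

section

variable {𝕜 E F : Type*} [NontriviallyNormedField 𝕜] [NormedAddCommGroup E] [NormedSpace 𝕜 E]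
  [NormedAddCommGroup F] [NormedSpace 𝕜 F]

theorem intrinsicFrontier_image_prodMk_const (c : F) (s : Set E) :
    intrinsicFrontier 𝕜 ((·, c) '' s) = (·, c) '' intrinsicFrontier 𝕜 s := by
  let φ : E →ᵃⁱ[𝕜] E × F := (AffineIsometryEquiv.constVAdd 𝕜 (E × F) (0, c)).toAffineIsometry.comp
    (LinearIsometry.inl 𝕜 E F).toAffineIsometry
  have hφ : ⇑φ = (·, c) := funext fun x => by simp [φ]
  rw [← hφ, AffineIsometry.intrinsicFrontier_image]

end

theorem frontier_vadd {α G : Type*} [TopologicalSpace α] [AddGroup G] [AddAction G α]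
    [ContinuousConstVAdd G α] (c : G) (s : Set α) : frontier (c +ᵥ s) = c +ᵥ frontier s := by
  rw [frontier, closure_vadd, interior_vadd, ← vadd_set_sdiff, frontier]

section

variable {E : Type*} [NormedAddCommGroup E] [NormedSpace ℝ E] {D : Set E} {a : E}

theorem gauge_vadd_neg_sub_eq_one (hD : Convex ℝ D) (ha : a ∈ interior D) {y : E}
    (hy : y ∈ frontier D) : gauge (-a +ᵥ D) (y - a) = 1 := by
  have h₀ : -a +ᵥ D ∈ 𝓝 0 := by
    rw [← mem_interior_iff_mem_nhds, interior_vadd]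
    simpa using vadd_mem_vadd_set (a := -a) ha
  rw [gauge_eq_one_iff_mem_frontier (hD.vadd (-a)) h₀, frontier_vadd]
  simpa [sub_eq_neg_add] using vadd_mem_vadd_set (a := -a) hy

theorem exists_lipschitzWith_gauge_vadd_neg_sub (hD : Convex ℝ D) (ha : a ∈ interior D) :
    ∃ K, LipschitzWith K fun x => gauge (-a +ᵥ D) (x - a) := by
  obtain ⟨r, hr, hball⟩ := Metric.isOpen_iff.1 isOpen_interior a ha
  have hball₀ : ball (0 : E) r ⊆ -a +ᵥ D := by
    intro z hz
    rw [mem_vadd_set_iff_neg_vadd_mem, neg_neg, vadd_eq_add]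
    exact interior_subset (hball (by simpa [add_comm] using hz))
  exact ⟨_, ((hD.vadd (-a)).lipschitzWith_gauge (r := ⟨r, hr.le⟩) hr hball₀).comp
    (IsometryEquiv.subRight a).isometry.lipschitz⟩

theorem truncatedConeLateral_subset_graph (hD : Convex ℝ D) (ha : a ∈ interior D) (p h : ℝ) :
    truncatedConeLateral (a, p) ((·, h) '' D) ⊆
      {z | z.2 = p + gauge (-a +ᵥ D) (z.1 - a) * (h - p)} := by
  rintro _ ⟨w, hw, l, hl, rfl⟩
  rw [intrinsicFrontier_image_prodMk_const] at hw
  obtain ⟨y, hy, rfl⟩ := hw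
  have hfst : (1 - l) • a + l • y - a = l • (y - a) := by
    rw [sub_smul, one_smul, smul_sub]
    abel
  simp only [mem_ofPred_eq, Prod.fst_add, Prod.snd_add, Prod.smul_fst, Prod.smul_snd, smul_eq_mul,
    hfst, gauge_smul_of_nonneg hl.1,
    gauge_vadd_neg_sub_eq_one hD ha (intrinsicFrontier_subset_frontier hy)]
  ring

end

theorem statement_8_general (n : ℕ)
    (D : Set (EuclideanSpace ℝ (Fin n)))
    (hD_conv : Convex ℝ D)
    (a : EuclideanSpace ℝ (Fin n)) (ha : a ∈ interior D)
    (p h : ℝ)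
    (T : Set (EuclideanSpace ℝ (Fin n) × ℝ))
    (hT : T = (fun x => (x, h)) '' D)
    (S : Set (EuclideanSpace ℝ (Fin n) × ℝ))
    (hS : S = {z | ∃ w ∈ intrinsicFrontier ℝ T, ∃ l ∈ Set.Icc (0:ℝ) 1,
      z = (1 - l) • ((a, p) : EuclideanSpace ℝ (Fin n) × ℝ) + l • w}) :
    ∃ M : ℝ, 0 ≤ M ∧ ∀ u ∈ S, ∀ v ∈ S, |v.2 - u.2| ≤ M * ‖v.1 - u.1‖ := by
  set g := fun x => gauge (-a +ᵥ D) (x - a)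
  obtain ⟨K, hK⟩ := exists_lipschitzWith_gauge_vadd_neg_sub hD_conv ha
  have hgraph : S ⊆ {z | z.2 = p + g z.1 * (h - p)} := by
    subst hT hS
    exact truncatedConeLateral_subset_graph hD_conv ha p h
  refine ⟨K * |h - p|, by positivity, fun u hu v hv => ?_⟩
  calc |v.2 - u.2| = |g v.1 - g u.1| * |h - p| := by
        rw [hgraph hv, hgraph hu, add_sub_add_left_eq_sub, ← sub_mul, abs_mul]
    _ ≤ K * ‖v.1 - u.1‖ * |h - p| := by
        gcongr
        simpa only [← Real.dist_eq, ← dist_eq_norm] using hK.dist_le_mul v.1 u.1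
    _ = K * |h - p| * ‖v.1 - u.1‖ := by ring

/-- the lateral of a truncated cone over a compact convex base,
with apex over an interior point, has finite steepness. -/
theorem statement_8 (n : ℕ) (hn : 1 ≤ n)
    (D : Set (EuclideanSpace ℝ (Fin n)))
    (hD_cpt : IsCompact D) (hD_conv : Convex ℝ D)
    (a : EuclideanSpace ℝ (Fin n)) (ha : a ∈ interior D)
    (p h : ℝ)
    (T : Set (EuclideanSpace ℝ (Fin n) × ℝ))
    (hT : T = (fun x => (x, h)) '' D)
    (S : Set (EuclideanSpace ℝ (Fin n) × ℝ))
    (hS : S = {z | ∃ w ∈ intrinsicFrontier ℝ T, ∃ l ∈ Set.Icc (0:ℝ) 1,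
      z = (1 - l) • ((a, p) : EuclideanSpace ℝ (Fin n) × ℝ) + l • w}) :
    ∃ M : ℝ, 0 ≤ M ∧ ∀ u ∈ S, ∀ v ∈ S, |v.2 - u.2| ≤ M * ‖v.1 - u.1‖ :=
  statement_8_general n D hD_conv a ha p h T hT S hS
end

section
/- Let D₁, D₂ ⊆ ℝⁿ be nonempty compact convex sets with D₁ ⊆ int D₂, let h₁ < h₂ be reals, T₁ = {(x, h₁) : x ∈ D₁}, T₂ = {(x, h₂) : x ∈ D₂}, F = conv(T₁ ∪ T₂) the top-heavy frustum, and P : ℝⁿ × ℝ → ℝⁿ the projection P(x, y) = x. If h₁ ≤ c₁ < c₂ ≤ h₂, then P(sect_{c₁} F) ⊆ int(P(sect_{c₂} F)). -/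
/-!
Writing a level as `c = (1 - t) h₁ + t h₂`, the section of the frustum at level `c` projects onto
the Minkowski combination `(1 - t) • D₁ + t • D₂`. For `s < t` a point `(1 - s) a + s b` of the
lower combination equals `(1 - t) a + s b + (t - s) a`, and since `a ∈ int D₂` it lies in the open
set `(1 - t) • D₁ + s • D₂ + (t - s) • int D₂`, which by convexity of `D₂` sits inside
`(1 - t) • D₁ + t • D₂`.
-/

open Set Pointwise

section Minkowski

variable {E : Type*} [AddCommGroup E] [Module ℝ E]

theorem fst_image_convexJoin_prod_singleton_inter_level {A B : Set E} {h₁ h₂ t : ℝ}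
    (hh : h₁ < h₂) (ht₀ : 0 ≤ t) (ht₁ : t ≤ 1) :
    Prod.fst '' (convexJoin ℝ (A ×ˢ {h₁}) (B ×ˢ {h₂}) ∩ {z | z.2 = (1 - t) * h₁ + t * h₂}) =
      (1 - t) • A + t • B := by
  ext x
  constructor
  · rintro ⟨_, ⟨hz, hzc⟩, rfl⟩
    obtain ⟨⟨a, _⟩, ⟨ha, rfl⟩, ⟨b, _⟩, ⟨hb, rfl⟩, p, q, -, -, hpq, rfl⟩ := mem_convexJoin.1 hz
    obtain rfl : p = 1 - q := by linarith
    obtain rfl : q = t := by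
      simp only [Prod.smul_mk, Prod.mk_add_mk, smul_eq_mul, mem_ofPred_eq] at hzc
      nlinarith
    exact add_mem_add (smul_mem_smul_set ha) (smul_mem_smul_set hb)
  · rintro ⟨_, ⟨a, ha, rfl⟩, _, ⟨b, hb, rfl⟩, rfl⟩
    refine ⟨_, ⟨mem_convexJoin.2 ⟨(a, h₁), ⟨ha, rfl⟩, (b, h₂), ⟨hb, rfl⟩,
      1 - t, t, sub_nonneg.2 ht₁, ht₀, sub_add_cancel 1 t, rfl⟩, ?_⟩, rfl⟩
    simp [smul_eq_mul]

variable [TopologicalSpace E] [IsTopologicalAddGroup E] [ContinuousConstSMul ℝ E]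

theorem Convex.smul_add_smul_subset_interior {A B : Set E} (hB : Convex ℝ B)
    (hAB : A ⊆ interior B) {s t : ℝ} (hs : 0 ≤ s) (hst : s < t) :
    (1 - s) • A + s • B ⊆ interior ((1 - t) • A + t • B) := by
  set U := (1 - t) • A + s • B + (t - s) • interior B
  have hU_open : IsOpen U := (isOpen_interior.smul₀ (sub_pos.2 hst).ne').add_left
  have hU_sub : U ⊆ (1 - t) • A + t • B :=
    calc U ⊆ (1 - t) • A + s • B + (t - s) • B :=
          add_subset_add_left (smul_set_mono interior_subset)
      _ = (1 - t) • A + t • B := by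
          rw [add_assoc, ← hB.add_smul hs (sub_nonneg.2 hst.le), add_sub_cancel]
  rintro _ ⟨_, ⟨a, ha, rfl⟩, y, hy, rfl⟩
  exact interior_maximal hU_sub hU_open ⟨(1 - t) • a + y,
    add_mem_add (smul_mem_smul_set ha) hy, (t - s) • a, smul_mem_smul_set (hAB ha), by module⟩

end Minkowski

theorem statement_10_general (n : ℕ)
    (D₁ D₂ : Set (EuclideanSpace ℝ (Fin n)))
    (hD₁ne : D₁.Nonempty) (hD₂ne : D₂.Nonempty)
    (hD₁conv : Convex ℝ D₁)
    (hD₂conv : Convex ℝ D₂)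
    (htop : D₁ ⊆ interior D₂)
    (h₁ h₂ : ℝ) (hh : h₁ < h₂)
    (T₁ T₂ F : Set (EuclideanSpace ℝ (Fin n) × ℝ))
    (hT₁ : T₁ = (fun x => (x, h₁)) '' D₁)
    (hT₂ : T₂ = (fun x => (x, h₂)) '' D₂)
    (hF : F = convexHull ℝ (T₁ ∪ T₂))
    (c₁ c₂ : ℝ) (hc₁ : h₁ ≤ c₁) (hc₁₂ : c₁ < c₂) (hc₂ : c₂ ≤ h₂) :
    Prod.fst '' (F ∩ {z : EuclideanSpace ℝ (Fin n) × ℝ | z.2 = c₁}) ⊆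
      interior (Prod.fst '' (F ∩ {z : EuclideanSpace ℝ (Fin n) × ℝ | z.2 = c₂})) := by
  rw [← prod_singleton] at hT₁ hT₂
  have hF_join : F = convexJoin ℝ (D₁ ×ˢ {h₁}) (D₂ ×ˢ {h₂}) := by
    rw [hF, hT₁, hT₂, convexHull_union (hD₁ne.prod (singleton_nonempty h₁))
      (hD₂ne.prod (singleton_nonempty h₂)), (hD₁conv.prod (convex_singleton h₁)).convexHull_eq,
      (hD₂conv.prod (convex_singleton h₂)).convexHull_eq]
  have level (c : ℝ) : ∃ t, c = (1 - t) * h₁ + t * h₂ :=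
    ⟨(c - h₁) / (h₂ - h₁), by field_simp [(sub_pos.2 hh).ne']; ring⟩
  obtain ⟨t₁, rfl⟩ := level c₁
  obtain ⟨t₂, rfl⟩ := level c₂
  have hd : 0 < h₂ - h₁ := sub_pos.2 hh
  have ht₁ : 0 ≤ t₁ := nonneg_of_mul_nonneg_left (by linarith) hd
  have ht₁₂ : t₁ < t₂ := lt_of_mul_lt_mul_right (by linarith) hd.le
  have ht₂ : t₂ ≤ 1 := le_of_mul_le_mul_right (by linarith) hd
  rw [hF_join, fst_image_convexJoin_prod_singleton_inter_level hh ht₁ (by linarith),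
    fst_image_convexJoin_prod_singleton_inter_level hh (by linarith) ht₂]
  exact hD₂conv.smul_add_smul_subset_interior htop ht₁ ht₁₂

/-- projections of lower sections of a top-heavy frustum lie in the interior of projections of higher sections. -/
theorem statement_10 (n : ℕ) (hn : 1 ≤ n)
    (D₁ D₂ : Set (EuclideanSpace ℝ (Fin n)))
    (hD₁ne : D₁.Nonempty) (hD₂ne : D₂.Nonempty)
    (hD₁cpt : IsCompact D₁) (hD₁conv : Convex ℝ D₁)
    (hD₂cpt : IsCompact D₂) (hD₂conv : Convex ℝ D₂)
    (htop : D₁ ⊆ interior D₂)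
    (h₁ h₂ : ℝ) (hh : h₁ < h₂)
    (T₁ T₂ F : Set (EuclideanSpace ℝ (Fin n) × ℝ))
    (hT₁ : T₁ = (fun x => (x, h₁)) '' D₁)
    (hT₂ : T₂ = (fun x => (x, h₂)) '' D₂)
    (hF : F = convexHull ℝ (T₁ ∪ T₂))
    (c₁ c₂ : ℝ) (hc₁ : h₁ ≤ c₁) (hc₁₂ : c₁ < c₂) (hc₂ : c₂ ≤ h₂) :
    Prod.fst '' (F ∩ {z : EuclideanSpace ℝ (Fin n) × ℝ | z.2 = c₁}) ⊆
      interior (Prod.fst '' (F ∩ {z : EuclideanSpace ℝ (Fin n) × ℝ | z.2 = c₂})) :=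
  statement_10_general n D₁ D₂ hD₁ne hD₂ne hD₁conv hD₂conv htop h₁ h₂ hh T₁ T₂ F hT₁ hT₂ hF c₁ c₂
    hc₁ hc₁₂ hc₂
end

section
/- Let D₁, D₂ ⊆ ℝⁿ be nonempty compact convex sets with D₁ ⊆ int D₂, h₁ < h₂ reals, T₁ = {(x, h₁) : x ∈ D₁}, T₂ = {(x, h₂) : x ∈ D₂}, F = conv(T₁ ∪ T₂) the top-heavy frustum with lateral S. Let â = (a, a₀) with a ∈ int D₁ and a₀ < h₁, and suppose trunc(â, T₂) is an upper envelope of F, i.e. F ⊆ trunc(â, T₂). Then Stp(S) ≤ Stp(S_a), where S_a is the lateral of trunc(â, T₂). -/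
/-!
Below every point `u` of `F` lies a point of `S_a`: writing `u` on a segment from the apex `â`
to `T₂` and sliding the end point radially from `a` out to the rim of `D₂` only shrinks the
segment parameter, which lowers the point since `a₀ < h₂`.

Now let `u, v ∈ S` with `v` higher. Extending the ray from `u.1` through `v.1` to a point `z` of
`frontier D₂`, convexity of `F` and `v ∉ interior F` force `v` to lie below the segment from `u`
to `(z, h₂)`. Hence the slope from `u` to `v` is at most the slope from the point of `S_a` below
`u` to `(z, h₂) ∈ S_a`.
-/

open scoped ENNReal

/-- The steepness of a subset of ℝⁿ × ℝ: the supremum (in `ℝ≥0∞`) of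
`|v' − u'| / ‖v − u‖` over pairs `(u, u'), (v, v')` in the set with `v ≠ u`. -/
noncomputable def Stp {n : ℕ} (S : Set (EuclideanSpace ℝ (Fin n) × ℝ)) : ℝ≥0∞ :=
  ⨆ u ∈ S, ⨆ v ∈ S, ⨆ (_ : v.1 ≠ u.1), ENNReal.ofReal (|v.2 - u.2| / ‖v.1 - u.1‖)

open Set

section

variable {V : Type*} [NormedAddCommGroup V] [NormedSpace ℝ V]

theorem IsCompact.exists_one_le_mem_frontier {s : Set V} (hs : IsCompact s) {x y : V}
    (hy : y ∈ s) (hxy : x ≠ y) : ∃ c : ℝ, 1 ≤ c ∧ x + c • (y - x) ∈ frontier s := by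
  set f : ℝ → V := fun c => x + c • (y - x)
  have hf : Topology.IsClosedEmbedding f :=
    (Homeomorph.addLeft x).isClosedEmbedding.comp
      (isClosedEmbedding_smul_left (sub_ne_zero.2 hxy.symm))
  have hA : IsCompact (Ici 1 ∩ f ⁻¹' s) := (hf.isCompact_preimage hs).inter_left isClosed_Ici
  obtain ⟨c, ⟨hc1, hcs⟩, hcmax⟩ :=
    hA.exists_isGreatest ⟨1, mem_Ici.2 le_rfl, by simpa [f] using hy⟩
  refine ⟨c, hc1, subset_closure hcs, fun hint => ?_⟩
  have hnear : ∀ᶠ c' in nhdsWithin c (Ioi c), f c' ∈ interior s :=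
    nhdsWithin_le_nhds (hf.continuous.continuousAt.preimage_mem_nhds
      (isOpen_interior.mem_nhds hint))
  obtain ⟨c', hc', hc'c⟩ := (hnear.and self_mem_nhdsWithin).exists
  exact (hcmax ⟨hc1.trans hc'c.le, interior_subset (s := s) hc'⟩).not_gt hc'c

theorem isCompact_convexHull_union {s t : Set V} (hs : Convex ℝ s) (ht : Convex ℝ t)
    (hsc : IsCompact s) (htc : IsCompact t) (hsn : s.Nonempty) (htn : t.Nonempty) :
    IsCompact (convexHull ℝ (s ∪ t)) := by
  have : convexHull ℝ (s ∪ t) =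
      (fun p : (V × V) × ℝ => (1 - p.2) • p.1.1 + p.2 • p.1.2) '' ((s ×ˢ t) ×ˢ Icc 0 1) := by
    ext z
    simp only [hs.convexHull_union ht hsn htn, mem_convexJoin, segment_eq_image, mem_image,
      mem_prod, Prod.exists]
    grind
  rw [this]
  exact ((hsc.prod htc).prod isCompact_Icc).image (by fun_prop)

theorem intrinsicInterior_eq_interior {s : Set V} (hs : (interior s).Nonempty) :
    intrinsicInterior ℝ s = interior s := by
  have hspan : (affineSpan ℝ s : Set V) = univ := by
    rw [affineSpan_eq_top_of_nonempty_interior (hs.mono (interior_mono (subset_convexHull ℝ s))),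
      AffineSubspace.top_coe]
  let e : affineSpan ℝ s ≃ₜ V := (Homeomorph.setCongr hspan).trans (Homeomorph.Set.univ V)
  have he : (Subtype.val : affineSpan ℝ s → V) = e := rfl
  rw [intrinsicInterior, he, ← e.preimage_interior, e.image_preimage]

theorem Convex.mk_mem_interior_of_prod_singleton_subset {F : Set (V × ℝ)} (hF : Convex ℝ F)
    {D : Set V} {h : ℝ} (hDF : D ×ˢ {h} ⊆ F) {x : V} (hx : x ∈ interior D) {H t : ℝ}
    (hH : (x, H) ∈ F) (hHt : H < t) (hth : t < h) : (x, t) ∈ interior F := by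
  -- the cone from `(x, H)` over `interior D ×ˢ {h}`, minus its apex and base
  set O : Set (V × ℝ) :=
    {q | H < q.2 ∧ q.2 < h ∧ x + ((h - H) / (q.2 - H)) • (q.1 - x) ∈ interior D}
  have hO : IsOpen O := by
    have hcont : ContinuousOn (fun q : V × ℝ => x + ((h - H) / (q.2 - H)) • (q.1 - x))
        {q | H < q.2} := by
      intro q hq
      have : q.2 - H ≠ 0 := (sub_pos.2 hq).ne'
      fun_prop (disch := assumption)
    have hO' : O = ({q | H < q.2} ∩
        (fun q : V × ℝ => x + ((h - H) / (q.2 - H)) • (q.1 - x)) ⁻¹' interior D) ∩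
        {q | q.2 < h} := by
      ext q; simp only [O, mem_ofPred_eq, mem_inter_iff, mem_preimage]; tauto
    rw [hO']
    exact (hcont.isOpen_inter_preimage (isOpen_lt continuous_const continuous_snd)
      isOpen_interior).inter (isOpen_lt continuous_snd continuous_const)
  have hxtO : (x, t) ∈ O := ⟨hHt, hth, by simpa using hx⟩
  refine interior_maximal (fun q (hqO : q ∈ O) => ?_) hO hxtO
  obtain ⟨hHq, hqh, hqD⟩ := hqO
  set μ := (q.2 - H) / (h - H)
  have hμ0 : 0 < μ := div_pos (by linarith) (by linarith)
  have hμ1 : μ ≤ 1 := (div_le_one (by linarith)).2 (by linarith)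
  have hq : q = (1 - μ) • (x, H) + μ • (x + μ⁻¹ • (q.1 - x), h) := by
    ext
    · simp only [Prod.fst_add, Prod.smul_fst, smul_add, smul_smul, mul_inv_cancel₀ hμ0.ne']
      module
    · have : h - H ≠ 0 := by linarith
      simp only [Prod.snd_add, Prod.smul_snd, smul_eq_mul, μ]
      field_simp
      ring
  rw [hq]
  refine hF hH (hDF ⟨interior_subset ?_, mem_singleton h⟩) (by linarith) hμ0.le (by ring)
  rwa [inv_div]

theorem Convex.exists_mem_frontier_slope_ge {F : Set (V × ℝ)} (hF : Convex ℝ F) {D : Set V}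
    (hD : IsCompact D) {h : ℝ} (hDF : D ×ˢ {h} ⊆ F) (hFD : F ⊆ D ×ˢ Iic h) {u v : V × ℝ}
    (hu : u ∈ F) (hv : v ∈ F) (hvF : v ∉ interior F) (hvD : v ∉ interior D ×ˢ {h})
    (huv : v.1 ≠ u.1) :
    ∃ z ∈ frontier D, z ≠ u.1 ∧ (v.2 - u.2) / ‖v.1 - u.1‖ ≤ (h - u.2) / ‖z - u.1‖ := by
  obtain ⟨hvD', hvh : v.2 ≤ h⟩ := hFD hv
  have hN : 0 < ‖v.1 - u.1‖ := norm_pos_iff.2 (sub_ne_zero.2 huv)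
  by_cases hvint : v.1 ∈ interior D
  swap
  · exact ⟨v.1, ⟨subset_closure hvD', hvint⟩, huv,
      div_le_div_of_nonneg_right (by linarith) hN.le⟩
  have hvh' : v.2 < h := hvh.lt_of_ne fun heq => hvD ⟨hvint, heq⟩
  obtain ⟨c, hc1, hz⟩ := hD.exists_one_le_mem_frontier hvD' huv.symm
  have hc0 : 0 < c := by linarith
  set z := u.1 + c • (v.1 - u.1)
  have hzu : z - u.1 = c • (v.1 - u.1) := add_sub_cancel_left _ _
  set H := (1 - c⁻¹) * u.2 + c⁻¹ * h
  have hHF : (v.1, H) ∈ F := by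
    have := hF hu (hDF (mk_mem_prod (hD.isClosed.frontier_subset hz) (mem_singleton h)))
      (sub_nonneg.2 (inv_le_one_of_one_le₀ hc1)) (inv_nonneg.2 hc0.le) (sub_add_cancel 1 c⁻¹)
    convert this using 1
    ext
    · simp only [Prod.fst_add, Prod.smul_fst, z, smul_add, smul_smul, inv_mul_cancel₀ hc0.ne']
      module
    · simp [H]
  -- `v` is on the boundary of `F`, so it cannot lie above the segment from `u` to `(z, h)`
  have hvH : v.2 ≤ H := by
    by_contra! hHv
    exact hvF (hF.mk_mem_interior_of_prod_singleton_subset hDF hvint hHF hHv hvh')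
  refine ⟨z, hz, sub_ne_zero.1 (hzu ▸ smul_ne_zero hc0.ne' (sub_ne_zero.2 huv)), ?_⟩
  rw [hzu, norm_smul, Real.norm_of_nonneg hc0.le, div_le_div_iff₀ hN (by positivity)]
  have : c * (v.2 - u.2) ≤ h - u.2 := calc
    c * (v.2 - u.2) ≤ c * (H - u.2) := by gcongr
    _ = h - u.2 := by simp only [H]; field_simp; ring
  nlinarith

theorem Convex.exists_mem_frontier_combo_eq {D : Set V} (hD : Convex ℝ D) (hDc : IsCompact D)
    (hfr : (frontier D).Nonempty) {a w : V} (ha : a ∈ interior D) (hw : w ∈ D) {l : ℝ}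
    (hl : l ∈ Icc (0 : ℝ) 1) :
    ∃ z ∈ frontier D, ∃ l' ∈ Icc 0 l, (1 - l) • a + l • w = (1 - l') • a + l' • z := by
  set x := (1 - l) • a + l • w
  by_cases hxa : x = a
  · obtain ⟨z, hz⟩ := hfr
    exact ⟨z, hz, 0, ⟨le_rfl, hl.1⟩, by simpa using hxa⟩
  have hx : x ∈ D := hD (interior_subset ha) hw (by linarith [hl.2]) hl.1 (by ring)
  obtain ⟨c, hc1, hz⟩ := hDc.exists_one_le_mem_frontier hx (Ne.symm hxa)
  have hc0 : 0 < c := by linarith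
  refine ⟨a + c • (x - a), hz, c⁻¹, ⟨inv_nonneg.2 hc0.le, ?_⟩, ?_⟩
  · -- otherwise the exit point is a proper combination of `a ∈ interior D` and `w ∈ D`
    by_contra! hlt
    have hcl : c * l < 1 := by
      calc c * l < c * c⁻¹ := by gcongr
        _ = 1 := mul_inv_cancel₀ hc0.ne'
    refine hz.2 ?_
    have : a + c • (x - a) = (1 - c * l) • a + (c * l) • w := by simp only [x]; module
    rw [this]
    exact hD.combo_interior_closure_mem_interior ha (subset_closure hw) (by linarith)
      (by nlinarith [hl.1]) (by ring)
  · rw [smul_add, smul_smul, inv_mul_cancel₀ hc0.ne']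
    module

theorem exists_le_combo_eq_of_mem_convexHull {D : Set V} (hD : Convex ℝ D) (hDc : IsCompact D)
    (hfr : (frontier D).Nonempty) {a : V} (ha : a ∈ interior D) {a₀ h : ℝ} (hah : a₀ ≤ h)
    {u : V × ℝ} (hu : u ∈ convexHull ℝ ({(a, a₀)} ∪ D ×ˢ {h})) :
    ∃ r ≤ u.2, ∃ z ∈ frontier D, ∃ l ∈ Icc (0 : ℝ) 1,
      (u.1, r) = (1 - l) • (a, a₀) + l • (z, h) := by
  have hne : (D ×ˢ {h}).Nonempty := ⟨(a, h), interior_subset ha, rfl⟩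
  rw [singleton_union, convexHull_insert hne, (hD.prod (convex_singleton h)).convexHull_eq,
    mem_convexJoin] at hu
  obtain ⟨p, rfl, ⟨w, t⟩, ⟨hw : w ∈ D, ht : t = h⟩, hseg⟩ := hu
  rw [ht, segment_eq_image] at hseg
  obtain ⟨l, hl, rfl⟩ := hseg
  obtain ⟨z, hz, l', hl', heq⟩ := hD.exists_mem_frontier_combo_eq hDc hfr ha hw hl
  refine ⟨(1 - l') * a₀ + l' * h, ?_, z, hz, l', ⟨hl'.1, hl'.2.trans hl.2⟩, ?_⟩
  · simp only [Prod.snd_add, Prod.smul_snd, smul_eq_mul]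
    nlinarith [hl'.2]
  · ext <;> simp [heq]

theorem intrinsicInterior_prod_singleton {s : Set V} (hs : (interior s).Nonempty) (h : ℝ) :
    intrinsicInterior ℝ (s ×ˢ {h}) = interior s ×ˢ {h} := by
  rw [intrinsicInterior_prod_eq, intrinsicInterior_eq_interior hs, intrinsicInterior_singleton]

theorem intrinsicFrontier_prod_singleton [FiniteDimensional ℝ V] {s : Set V}
    (hs : (interior s).Nonempty) (h : ℝ) :
    intrinsicFrontier ℝ (s ×ˢ {h}) = frontier s ×ˢ {h} := by
  rw [← closure_sdiff_intrinsicInterior, intrinsicInterior_prod_singleton hs, closure_prod_eq,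
    closure_singleton, frontier]
  ext
  simp only [mem_sdiff, mem_prod, mem_singleton_iff]
  tauto

end

theorem stp_le_stp_of_forall {n : ℕ} {S S' : Set (EuclideanSpace ℝ (Fin n) × ℝ)}
    (h : ∀ u ∈ S, ∀ v ∈ S, v.1 ≠ u.1 → u.2 ≤ v.2 → ∃ p ∈ S', ∃ q ∈ S', q.1 ≠ p.1 ∧
      (v.2 - u.2) / ‖v.1 - u.1‖ ≤ |q.2 - p.2| / ‖q.1 - p.1‖) :
    Stp S ≤ Stp S' := by
  have key : ∀ u ∈ S, ∀ v ∈ S, v.1 ≠ u.1 → u.2 ≤ v.2 →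
      ENNReal.ofReal ((v.2 - u.2) / ‖v.1 - u.1‖) ≤ Stp S' := by
    intro u hu v hv huv hle
    obtain ⟨p, hp, q, hq, hpq, hslope⟩ := h u hu v hv huv hle
    exact (ENNReal.ofReal_le_ofReal hslope).trans
      (le_iSup₂_of_le p hp <| le_iSup₂_of_le q hq <| le_iSup_of_le hpq le_rfl)
  refine iSup₂_le fun u hu => iSup₂_le fun v hv => iSup_le fun huv => ?_
  rcases le_total u.2 v.2 with hle | hle
  · rw [abs_of_nonneg (sub_nonneg.2 hle)]
    exact key u hu v hv huv hle
  · rw [abs_sub_comm, abs_of_nonneg (sub_nonneg.2 hle), norm_sub_rev]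
    exact key v hv u hu huv.symm hle

theorem statement_12_general (n : ℕ) (hn : 1 ≤ n)
    (D₁ D₂ : Set (EuclideanSpace ℝ (Fin n)))
    (hD₁cpt : IsCompact D₁) (hD₁conv : Convex ℝ D₁)
    (hD₂cpt : IsCompact D₂) (hD₂conv : Convex ℝ D₂)
    (htop : D₁ ⊆ interior D₂)
    (h₁ h₂ : ℝ) (hh : h₁ < h₂)
    (T₁ T₂ F : Set (EuclideanSpace ℝ (Fin n) × ℝ))
    (hT₁ : T₁ = (fun x => (x, h₁)) '' D₁)
    (hT₂ : T₂ = (fun x => (x, h₂)) '' D₂)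
    (hF : F = convexHull ℝ (T₁ ∪ T₂))
    (S : Set (EuclideanSpace ℝ (Fin n) × ℝ))
    (hS : S = frontier F \ (intrinsicInterior ℝ T₁ ∪ intrinsicInterior ℝ T₂))
    (a : EuclideanSpace ℝ (Fin n)) (a₀ : ℝ) (ha : a ∈ interior D₁) (ha₀ : a₀ < h₁)
    -- trunc(â, T₂) is an upper envelope of F
    (henv : F ⊆ convexHull ℝ ({((a, a₀) : EuclideanSpace ℝ (Fin n) × ℝ)} ∪ T₂))
    (Sa : Set (EuclideanSpace ℝ (Fin n) × ℝ))
    (hSa : Sa = {z | ∃ w ∈ intrinsicFrontier ℝ T₂, ∃ l ∈ Set.Icc (0:ℝ) 1,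
      z = (1 - l) • ((a, a₀) : EuclideanSpace ℝ (Fin n) × ℝ) + l • w}) :
    Stp S ≤ Stp Sa := by
  have : Nonempty (Fin n) := ⟨⟨0, hn⟩⟩
  rw [← prod_singleton] at hT₁ hT₂
  subst hT₁ hT₂ hS hSa
  have haD₂ : a ∈ interior D₂ := htop (interior_subset ha)
  have hfr : (frontier D₂).Nonempty :=
    nonempty_frontier_iff.2 ⟨⟨a, interior_subset haD₂⟩, fun h => noncompact_univ _ (h ▸ hD₂cpt)⟩
  have hFc : IsCompact F := hF ▸ isCompact_convexHull_union
    (hD₁conv.prod (convex_singleton h₁)) (hD₂conv.prod (convex_singleton h₂))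
    (hD₁cpt.prod isCompact_singleton) (hD₂cpt.prod isCompact_singleton)
    ⟨(a, h₁), interior_subset ha, rfl⟩ ⟨(a, h₂), interior_subset haD₂, rfl⟩
  have hFD : F ⊆ D₂ ×ˢ Iic h₂ := hF ▸ convexHull_min
    (union_subset (prod_mono (htop.trans interior_subset) (singleton_subset_iff.2 hh.le))
      (prod_mono subset_rfl (singleton_subset_iff.2 (mem_Iic.2 le_rfl))))
    (hD₂conv.prod (convex_Iic h₂))
  have hDF : D₂ ×ˢ {h₂} ⊆ F := subset_union_right.trans (hF ▸ subset_convexHull ℝ _)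
  rw [intrinsicInterior_prod_singleton ⟨a, haD₂⟩, intrinsicFrontier_prod_singleton ⟨a, haD₂⟩]
  refine stp_le_stp_of_forall fun u ⟨huF, _⟩ v ⟨hvF, hvT⟩ huv _ => ?_
  have hu : u ∈ F := hFc.isClosed.frontier_subset huF
  obtain ⟨z, hz, hzu, hslope⟩ := (hF ▸ convex_convexHull ℝ _).exists_mem_frontier_slope_ge
    hD₂cpt hDF hFD hu (hFc.isClosed.frontier_subset hvF) hvF.2 (fun hv₂ => hvT (Or.inr hv₂)) huv
  obtain ⟨r, hr, w, hw, l, hl, hrw⟩ := exists_le_combo_eq_of_mem_convexHull hD₂conv hD₂cpt hfr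
    haD₂ (ha₀.trans hh).le (henv hu)
  refine ⟨(u.1, r), ⟨(w, h₂), ⟨hw, rfl⟩, l, hl, hrw⟩, (z, h₂), ⟨(z, h₂), ⟨hz, rfl⟩, 1,
    ⟨zero_le_one, le_rfl⟩, by simp⟩, hzu, ?_⟩
  calc (v.2 - u.2) / ‖v.1 - u.1‖ ≤ (h₂ - u.2) / ‖z - u.1‖ := hslope
    _ ≤ |h₂ - r| / ‖z - u.1‖ := by gcongr; exact (sub_le_sub_left hr h₂).trans (le_abs_self _)

/-- the lateral of a top-heavy frustum is no steeper than the lateral of an upper envelope. -/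
theorem statement_12 (n : ℕ) (hn : 1 ≤ n)
    (D₁ D₂ : Set (EuclideanSpace ℝ (Fin n)))
    (hD₁ne : D₁.Nonempty) (hD₂ne : D₂.Nonempty)
    (hD₁cpt : IsCompact D₁) (hD₁conv : Convex ℝ D₁)
    (hD₂cpt : IsCompact D₂) (hD₂conv : Convex ℝ D₂)
    (htop : D₁ ⊆ interior D₂)
    (h₁ h₂ : ℝ) (hh : h₁ < h₂)
    (T₁ T₂ F : Set (EuclideanSpace ℝ (Fin n) × ℝ))
    (hT₁ : T₁ = (fun x => (x, h₁)) '' D₁)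
    (hT₂ : T₂ = (fun x => (x, h₂)) '' D₂)
    (hF : F = convexHull ℝ (T₁ ∪ T₂))
    (S : Set (EuclideanSpace ℝ (Fin n) × ℝ))
    (hS : S = frontier F \ (intrinsicInterior ℝ T₁ ∪ intrinsicInterior ℝ T₂))
    (a : EuclideanSpace ℝ (Fin n)) (a₀ : ℝ) (ha : a ∈ interior D₁) (ha₀ : a₀ < h₁)
    -- trunc(â, T₂) is an upper envelope of F
    (henv : F ⊆ convexHull ℝ ({((a, a₀) : EuclideanSpace ℝ (Fin n) × ℝ)} ∪ T₂))
    (Sa : Set (EuclideanSpace ℝ (Fin n) × ℝ))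
    (hSa : Sa = {z | ∃ w ∈ intrinsicFrontier ℝ T₂, ∃ l ∈ Set.Icc (0:ℝ) 1,
      z = (1 - l) • ((a, a₀) : EuclideanSpace ℝ (Fin n) × ℝ) + l • w}) :
    Stp S ≤ Stp Sa :=
  statement_12_general n hn D₁ D₂ hD₁cpt hD₁conv hD₂cpt hD₂conv htop h₁ h₂ hh T₁ T₂ F hT₁ hT₂ hF S
    hS a a₀ ha ha₀ henv Sa hSa
end

section
/- Let D₁, D₂ ⊆ ℝⁿ be compact convex sets with nonempty interior such that D₁ ⊆ int D₂. Let ψ : D₁ → ℝ be a convex function that is constant on the boundary of D₁ and satisfies Stp(ψ) < +∞. Then there exists a convex function ψ̃ : D₂ → ℝ such that (i) ψ̃ restricted to D₁ equals ψ; (ii) ψ̃ is constant on the boundary of D₂; and (iii) Stp(ψ̃) < +∞. -/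
/-!
The infimal convolution `x ↦ ⨅ u ∈ D₁, ψ u + M ‖x - u‖` extends `ψ` to a convex `M`-Lipschitz
function `F` on the whole space. Let `g` be the gauge of `D₂` centred at a point of `D₁`: it is
convex, Lipschitz, equal to `1` on `∂D₂` and at most some `θ < 1` on the compact set `D₁`. The
affine function `a (g - 1) + C` of slope `a = (C - m) / (1 - θ)`, with `C = max_{D₂} F` and
`m = min_{D₁} F`, equals `C ≥ F` on `∂D₂` and is `≤ m ≤ F` on `D₁`, so its maximum with `F` is the
required extension.
-/

open Set
open scoped NNReal

theorem convexOn_gauge {V : Type*} [AddCommGroup V] [Module ℝ V] {s : Set V} (hc : Convex ℝ s)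
    (hs : Absorbent ℝ s) : ConvexOn ℝ univ (gauge s) := by
  refine ⟨convex_univ, fun x _ y _ a b ha hb _ => ?_⟩
  calc gauge s (a • x + b • y) ≤ gauge s (a • x) + gauge s (b • y) := gauge_add_le hc hs _ _
    _ = a • gauge s x + b • gauge s y := by
      rw [gauge_smul_of_nonneg ha, gauge_smul_of_nonneg hb]

variable {E : Type*} [NormedAddCommGroup E]

theorem Convex.exists_convexOn_lipschitzWith_eq_one_on_frontier [NormedSpace ℝ E] {t : Set E}
    (ht : Convex ℝ t) {z : E} (hz : z ∈ interior t) :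
    ∃ g : E → ℝ, ConvexOn ℝ univ g ∧ (∃ K, LipschitzWith K g) ∧
      (∀ x ∈ frontier t, g x = 1) ∧ ∀ x ∈ interior t, g x < 1 := by
  set T := Homeomorph.addLeft (-z) '' t
  have hTc : Convex ℝ T := ht.translate (-z)
  have hT₀ : T ∈ nhds 0 := by
    rw [← mem_interior_iff_mem_nhds, ← Homeomorph.image_interior]
    exact ⟨z, hz, neg_add_cancel z⟩
  obtain ⟨K, hK⟩ := hTc.lipschitz_gauge hT₀
  refine ⟨gauge T ∘ fun x => -z + x, ?_, ⟨K * 1, hK.comp (isometry_add_left (-z)).lipschitz⟩,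
    fun x hx => ?_, fun x hx => ?_⟩
  · simpa using (convexOn_gauge hTc (absorbent_nhds_zero hT₀)).translate_right (-z)
  · rw [Function.comp_apply, gauge_eq_one_iff_mem_frontier hTc hT₀, ← Homeomorph.image_frontier]
    exact mem_image_of_mem _ hx
  · rw [Function.comp_apply, gauge_lt_one_iff_mem_interior hTc hT₀, ← Homeomorph.image_interior]
    exact mem_image_of_mem _ hx

section ConvexLipschitzExtension

variable {s : Set E} {f : E → ℝ} {K : ℝ≥0}

noncomputable def convexLipschitzExtension (s : Set E) (f : E → ℝ) (K : ℝ≥0) (x : E) : ℝ :=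
  ⨅ u : s, f u + K * ‖x - u‖

theorem bddBelow_range_add_mul_norm_sub (hf : LipschitzOnWith K f s) {z : E} (hz : z ∈ s)
    (x : E) : BddBelow (range fun u : s => f u + K * ‖x - u‖) := by
  refine ⟨f z - K * ‖x - z‖, ?_⟩
  rintro _ ⟨u, rfl⟩
  have hzu : ‖z - u‖ ≤ ‖x - z‖ + ‖x - u‖ := by
    simpa only [← dist_eq_norm] using dist_triangle_left z u x
  have hfzu := hf.le_add_mul hz u.2
  rw [dist_eq_norm] at hfzu
  nlinarith [K.2]

theorem convexLipschitzExtension_eqOn (hf : LipschitzOnWith K f s) :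
    EqOn (convexLipschitzExtension s f K) f s := fun x hx => by
  have : Nonempty s := ⟨⟨x, hx⟩⟩
  refine le_antisymm ((ciInf_le (bddBelow_range_add_mul_norm_sub hf hx x) ⟨x, hx⟩).trans_eq ?_)
    (le_ciInf fun u => by simpa [dist_eq_norm] using hf.le_add_mul hx u.2)
  simp

theorem lipschitzWith_convexLipschitzExtension (hf : LipschitzOnWith K f s) (hs : s.Nonempty) :
    LipschitzWith K (convexLipschitzExtension s f K) := by
  have : Nonempty s := hs.to_subtype
  obtain ⟨z, hz⟩ := hs
  refine LipschitzWith.of_le_add_mul K fun x y => ?_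
  rw [convexLipschitzExtension, ← sub_le_iff_le_add]
  refine le_ciInf fun u => ?_
  have hxu : ‖x - u‖ ≤ dist x y + ‖y - u‖ := by
    simpa only [← dist_eq_norm] using dist_triangle x y u
  have hinf_le := ciInf_le (bddBelow_range_add_mul_norm_sub hf hz x) u
  nlinarith [K.2]

theorem convexOn_convexLipschitzExtension [NormedSpace ℝ E] (hf : LipschitzOnWith K f s)
    (hfc : ConvexOn ℝ s f) (hs : s.Nonempty) :
    ConvexOn ℝ univ (convexLipschitzExtension s f K) := by
  have : Nonempty s := hs.to_subtype
  obtain ⟨z, hz⟩ := hs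
  refine ⟨convex_univ, fun x _ y _ a b ha hb hab => ?_⟩
  simp only [smul_eq_mul, convexLipschitzExtension, Real.mul_iInf_of_nonneg ha,
    Real.mul_iInf_of_nonneg hb]
  refine le_ciInf_add_ciInf fun u v => ?_
  have hw : a • (u : E) + b • (v : E) ∈ s := hfc.1 u.2 v.2 ha hb hab
  have hnorm : ‖a • x + b • y - (a • (u : E) + b • (v : E))‖ ≤ a * ‖x - u‖ + b * ‖y - v‖ := by
    calc ‖a • x + b • y - (a • (u : E) + b • (v : E))‖ = ‖a • (x - u) + b • (y - v)‖ := by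
          rw [smul_sub, smul_sub, add_sub_add_comm]
      _ ≤ a * ‖x - u‖ + b * ‖y - v‖ := by
          grw [norm_add_le, norm_smul_of_nonneg ha, norm_smul_of_nonneg hb]
  calc ⨅ w : s, f w + K * ‖a • x + b • y - w‖
      ≤ f (a • u + b • v) + K * ‖a • x + b • y - (a • (u : E) + b • (v : E))‖ :=
        ciInf_le (bddBelow_range_add_mul_norm_sub hf hz _) ⟨_, hw⟩
    _ ≤ a * f u + b * f v + K * (a * ‖x - u‖ + b * ‖y - v‖) := by
        grw [hfc.2 u.2 v.2 ha hb hab, hnorm]; rfl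
    _ = a * (f u + K * ‖x - u‖) + b * (f v + K * ‖y - v‖) := by ring

end ConvexLipschitzExtension

theorem ConvexOn.exists_eqOn_and_const_on_frontier [NormedSpace ℝ E] {s t : Set E} {F : E → ℝ}
    {K : ℝ≥0} (hs : IsCompact s) (hs₀ : s.Nonempty) (hst : s ⊆ interior t) (ht : IsCompact t)
    (hF : ConvexOn ℝ t F) (hFK : LipschitzWith K F) :
    ∃ G : E → ℝ, ConvexOn ℝ t G ∧ EqOn G F s ∧ (∃ C, ∀ x ∈ frontier t, G x = C) ∧
      ∃ K', LipschitzWith K' G := by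
  obtain ⟨z, hz⟩ := hs₀
  obtain ⟨g, hg, ⟨Kg, hgK⟩, hg_frontier, hg_interior⟩ :=
    hF.1.exists_convexOn_lipschitzWith_eq_one_on_frontier (hst hz)
  obtain ⟨w, hw, hw_max⟩ := hs.exists_isMaxOn ⟨z, hz⟩ hgK.continuous.continuousOn
  obtain ⟨p, hp, hp_max⟩ := ht.exists_isMaxOn ⟨z, interior_subset (hst hz)⟩
    hFK.continuous.continuousOn
  obtain ⟨q, hq, hq_min⟩ := hs.exists_isMinOn ⟨z, hz⟩ hFK.continuous.continuousOn
  have hθ : g w < 1 := hg_interior w (hst hw)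
  set a := (F p - F q) / (1 - g w)
  have ha : 0 ≤ a := div_nonneg (sub_nonneg.2 (hp_max (interior_subset (hst hq)))) (by linarith)
  set cone : E → ℝ := fun x => a * (g x - 1) + F p
  have hcone : ConvexOn ℝ univ cone := by
    have hcone_eq : cone = (fun x => a • g x) + fun _ => F p - a := by
      funext x
      simp only [cone, Pi.add_apply, smul_eq_mul]
      ring
    rw [hcone_eq]
    exact (hg.smul ha).add_const (F p - a)
  have hcone_le : ∀ x ∈ s, cone x ≤ F x := fun x hx => by
    have ha_θ : a * (g w - 1) = F q - F p := by
      rw [show g w - 1 = -(1 - g w) by ring, mul_neg, div_mul_cancel₀ _ (by linarith)]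
      ring
    have hgx : a * (g x - 1) ≤ a * (g w - 1) :=
      mul_le_mul_of_nonneg_left (sub_le_sub_right (hw_max hx) 1) ha
    have hFx : F q ≤ F x := hq_min hx
    simp only [cone]
    linarith
  have hcone_lip : LipschitzWith (a.toNNReal * Kg) cone := by
    refine LipschitzWith.of_dist_le_mul fun x y => ?_
    rw [Real.dist_eq, NNReal.coe_mul, Real.coe_toNNReal a ha, mul_assoc, ← Real.dist_eq]
    calc |a * (g x - 1) + F p - (a * (g y - 1) + F p)| = |a| * |g x - g y| := by
          rw [← abs_mul]
          ring_nf
      _ = a * dist (g x) (g y) := by rw [abs_of_nonneg ha, Real.dist_eq]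
      _ ≤ a * (Kg * dist x y) := mul_le_mul_of_nonneg_left (hgK.dist_le_mul x y) ha
  refine ⟨fun x => max (F x) (cone x), hF.sup (hcone.subset (subset_univ t) hF.1),
    fun x hx => max_eq_left (hcone_le x hx), ⟨F p, fun x hx => ?_⟩, _, hFK.max hcone_lip⟩
  have hcone_eq : cone x = F p := by simp [cone, hg_frontier x hx]
  change max (F x) (cone x) = F p
  rw [hcone_eq]
  exact max_eq_right (hp_max (ht.isClosed.frontier_subset hx))

theorem statement_14_general (n : ℕ)
    (D₁ D₂ : Set (EuclideanSpace ℝ (Fin n)))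
    (hD₁cpt : IsCompact D₁) (hD₁int : (interior D₁).Nonempty)
    (hD₂cpt : IsCompact D₂) (hD₂conv : Convex ℝ D₂)
    (htop : D₁ ⊆ interior D₂)
    (ψ : EuclideanSpace ℝ (Fin n) → ℝ) (hψ_conv : ConvexOn ℝ D₁ ψ)
    -- Stp(ψ) < +∞ on D₁
    (M : ℝ) (hM : 0 ≤ M) (hstp : ∀ u ∈ D₁, ∀ v ∈ D₁, |ψ v - ψ u| ≤ M * ‖v - u‖) :
    ∃ ψt : EuclideanSpace ℝ (Fin n) → ℝ, ConvexOn ℝ D₂ ψt ∧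
      (∀ x ∈ D₁, ψt x = ψ x) ∧
      (∃ c₂ : ℝ, ∀ x ∈ frontier D₂, ψt x = c₂) ∧
      (∃ M' : ℝ, 0 ≤ M' ∧ ∀ u ∈ D₂, ∀ v ∈ D₂, |ψt v - ψt u| ≤ M' * ‖v - u‖) := by
  have hD₁ : D₁.Nonempty := hD₁int.mono interior_subset
  have hψ_lip : LipschitzOnWith M.toNNReal ψ D₁ :=
    LipschitzOnWith.of_dist_le_mul fun u hu v hv => by
      simpa [Real.dist_eq, dist_eq_norm, Real.coe_toNNReal M hM] using hstp v hv u hu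
  obtain ⟨G, hG_conv, hG_eq, hG_frontier, K, hG_lip⟩ :=
    ((convexOn_convexLipschitzExtension hψ_lip hψ_conv hD₁).subset (subset_univ D₂) hD₂conv
      ).exists_eqOn_and_const_on_frontier hD₁cpt hD₁ htop hD₂cpt
      (lipschitzWith_convexLipschitzExtension hψ_lip hD₁)
  refine ⟨G, hG_conv, fun x hx => (hG_eq hx).trans (convexLipschitzExtension_eqOn hψ_lip hx),
    hG_frontier, K, K.2, fun u _ v _ => ?_⟩
  simpa [Real.dist_eq, dist_eq_norm] using hG_lip.dist_le_mul v u

/-- extension of a boundary-constant convex function of finite steepness from D₁ to D₂. -/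
theorem statement_14 (n : ℕ) (hn : 1 ≤ n)
    (D₁ D₂ : Set (EuclideanSpace ℝ (Fin n)))
    (hD₁cpt : IsCompact D₁) (hD₁conv : Convex ℝ D₁) (hD₁int : (interior D₁).Nonempty)
    (hD₂cpt : IsCompact D₂) (hD₂conv : Convex ℝ D₂) (hD₂int : (interior D₂).Nonempty)
    (htop : D₁ ⊆ interior D₂)
    (ψ : EuclideanSpace ℝ (Fin n) → ℝ) (hψ_conv : ConvexOn ℝ D₁ ψ)
    -- ψ is constant on the boundary of D₁
    (c : ℝ) (hconst : ∀ x ∈ frontier D₁, ψ x = c)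
    -- Stp(ψ) < +∞ on D₁
    (M : ℝ) (hM : 0 ≤ M) (hstp : ∀ u ∈ D₁, ∀ v ∈ D₁, |ψ v - ψ u| ≤ M * ‖v - u‖) :
    ∃ ψt : EuclideanSpace ℝ (Fin n) → ℝ, ConvexOn ℝ D₂ ψt ∧
      (∀ x ∈ D₁, ψt x = ψ x) ∧
      (∃ c₂ : ℝ, ∀ x ∈ frontier D₂, ψt x = c₂) ∧
      (∃ M' : ℝ, 0 ≤ M' ∧ ∀ u ∈ D₂, ∀ v ∈ D₂, |ψt v - ψt u| ≤ M' * ‖v - u‖) :=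
  statement_14_general n D₁ D₂ hD₁cpt hD₁int hD₂cpt hD₂conv htop ψ hψ_conv M hM hstp
end

section
/- Let D ⊆ ℝⁿ be a compact convex set with nonempty interior, and let ψ : D → ℝ be a convex function such that ψ is constant on the boundary of D and Stp(ψ) < +∞. Then there exists a convex function ψ̃ : ℝⁿ → ℝ such that ψ̃ restricted to D equals ψ. -/
/-- extension of a boundary-constant convex function of finite steepness to a convex function on all of ℝⁿ. -/
theorem statement_15 (n : ℕ) (hn : 1 ≤ n)
    (D : Set (EuclideanSpace ℝ (Fin n)))
    (hDcpt : IsCompact D) (hDconv : Convex ℝ D) (hDint : (interior D).Nonempty)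
    (ψ : EuclideanSpace ℝ (Fin n) → ℝ) (hψ_conv : ConvexOn ℝ D ψ)
    -- ψ is constant on the boundary of D
    (c : ℝ) (hconst : ∀ x ∈ frontier D, ψ x = c)
    -- Stp(ψ) < +∞ on D
    (M : ℝ) (hM : 0 ≤ M) (hstp : ∀ u ∈ D, ∀ v ∈ D, |ψ v - ψ u| ≤ M * ‖v - u‖) :
    ∃ ψt : EuclideanSpace ℝ (Fin n) → ℝ, ConvexOn ℝ Set.univ ψt ∧ ∀ x ∈ D, ψt x = ψ x := by
  obtain ⟨u0, hu0'⟩ := hDint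
  have hu0 : u0 ∈ D := interior_subset hu0'
  haveI : Nonempty D := ⟨⟨u0, hu0⟩⟩
  -- lower bound for ψ on D
  obtain ⟨C, hC⟩ := (Metric.isBounded_iff_subset_closedBall u0).1 hDcpt.isBounded
  have hψlb : ∀ y ∈ D, ψ u0 - M * C ≤ ψ y := by
    intro y hy
    have h1 := hstp y hy u0 hu0
    have h2 : ‖u0 - y‖ ≤ C := by
      have := hC hy
      simpa [Metric.mem_closedBall, dist_eq_norm, norm_sub_rev] using this
    have := (abs_le.1 h1).2
    nlinarith [mul_le_mul_of_nonneg_left h2 hM]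
  set f : EuclideanSpace ℝ (Fin n) → ℝ :=
    fun x => ⨅ y : D, (ψ y + M * ‖x - (y : EuclideanSpace ℝ (Fin n))‖) with hf
  have hbdd : ∀ x, BddBelow (Set.range fun y : D => ψ y + M * ‖x - (y : EuclideanSpace ℝ (Fin n))‖) := by
    intro x
    refine ⟨ψ u0 - M * C, ?_⟩
    rintro r ⟨y, rfl⟩
    dsimp only
    have := hψlb y y.2
    have h2 : 0 ≤ M * ‖x - (y : EuclideanSpace ℝ (Fin n))‖ :=
      mul_nonneg hM (norm_nonneg _)
    linarith
  have hfle : ∀ x, ∀ y ∈ D, f x ≤ ψ y + M * ‖x - y‖ := by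
    intro x y hy
    exact ciInf_le (hbdd x) ⟨y, hy⟩
  have hfeq : ∀ x ∈ D, f x = ψ x := by
    intro x hx
    refine le_antisymm (by simpa using hfle x x hx) ?_
    refine le_ciInf fun y => ?_
    have h1 := hstp (y : EuclideanSpace ℝ (Fin n)) y.2 x hx
    have := (abs_le.1 h1).2
    linarith
  refine ⟨f, ⟨convex_univ, ?_⟩, hfeq⟩
  intro x1 _ x2 _ a b ha hb hab
  rcases eq_or_lt_of_le ha with ha0 | ha0
  · have hb1 : b = 1 := by linarith
    simp [← ha0, hb1]
  rcases eq_or_lt_of_le hb with hb0 | hb0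
  · have ha1 : a = 1 := by linarith
    simp [← hb0, ha1]
  have key : ∀ ε > 0, f (a • x1 + b • x2) ≤ a * f x1 + b * f x2 + ε := by
    intro ε hε
    have h1 : f x1 < f x1 + ε := by linarith
    have h2 : f x2 < f x2 + ε := by linarith
    obtain ⟨y1, hy1⟩ := exists_lt_of_ciInf_lt (by exact h1 : f x1 < f x1 + ε)
    obtain ⟨y2, hy2⟩ := exists_lt_of_ciInf_lt (by exact h2 : f x2 < f x2 + ε)
    have hymem : a • (y1 : EuclideanSpace ℝ (Fin n)) + b • (y2 : EuclideanSpace ℝ (Fin n)) ∈ D :=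
      hDconv y1.2 y2.2 ha hb hab
    have step1 : f (a • x1 + b • x2) ≤
        ψ (a • (y1 : EuclideanSpace ℝ (Fin n)) + b • y2)
          + M * ‖(a • x1 + b • x2) - (a • (y1 : EuclideanSpace ℝ (Fin n)) + b • y2)‖ :=
      hfle _ _ hymem
    have hψc : ψ (a • (y1 : EuclideanSpace ℝ (Fin n)) + b • y2) ≤ a * ψ y1 + b * ψ y2 :=
      hψ_conv.2 y1.2 y2.2 ha hb hab
    have hnorm : ‖(a • x1 + b • x2) - (a • (y1 : EuclideanSpace ℝ (Fin n)) + b • y2)‖ ≤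
        a * ‖x1 - (y1 : EuclideanSpace ℝ (Fin n))‖ + b * ‖x2 - (y2 : EuclideanSpace ℝ (Fin n))‖ := by
      have : (a • x1 + b • x2) - (a • (y1 : EuclideanSpace ℝ (Fin n)) + b • y2)
          = a • (x1 - (y1 : EuclideanSpace ℝ (Fin n))) + b • (x2 - (y2 : EuclideanSpace ℝ (Fin n))) := by
        module
      rw [this]
      calc ‖a • (x1 - (y1 : EuclideanSpace ℝ (Fin n))) + b • (x2 - (y2 : EuclideanSpace ℝ (Fin n)))‖
          ≤ ‖a • (x1 - (y1 : EuclideanSpace ℝ (Fin n)))‖ + ‖b • (x2 - (y2 : EuclideanSpace ℝ (Fin n)))‖ :=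
            norm_add_le _ _
        _ = a * ‖x1 - (y1 : EuclideanSpace ℝ (Fin n))‖ + b * ‖x2 - (y2 : EuclideanSpace ℝ (Fin n))‖ := by
            rw [norm_smul, norm_smul, Real.norm_eq_abs, Real.norm_eq_abs, abs_of_nonneg ha,
              abs_of_nonneg hb]
    have hMn : M * ‖(a • x1 + b • x2) - (a • (y1 : EuclideanSpace ℝ (Fin n)) + b • y2)‖ ≤
        a * (M * ‖x1 - (y1 : EuclideanSpace ℝ (Fin n))‖) + b * (M * ‖x2 - (y2 : EuclideanSpace ℝ (Fin n))‖) := by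
      have := mul_le_mul_of_nonneg_left hnorm hM
      nlinarith
    have e1 : a * (ψ y1 + M * ‖x1 - (y1 : EuclideanSpace ℝ (Fin n))‖) ≤ a * (f x1 + ε) :=
      mul_le_mul_of_nonneg_left (le_of_lt hy1) ha
    have e2 : b * (ψ y2 + M * ‖x2 - (y2 : EuclideanSpace ℝ (Fin n))‖) ≤ b * (f x2 + ε) :=
      mul_le_mul_of_nonneg_left (le_of_lt hy2) hb
    nlinarith
  by_contra h
  push_neg at h
  simp only [smul_eq_mul] at h
  obtain ⟨ε, hε, hlt⟩ : ∃ ε > 0, a * f x1 + b * f x2 + ε < f (a • x1 + b • x2) :=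
    ⟨(f (a • x1 + b • x2) - (a * f x1 + b * f x2)) / 2, by linarith, by linarith⟩
  exact absurd (key ε hε) (by linarith)
end

section
/- Let D ⊆ ℝⁿ be a compact convex set, a ∈ int D, c ∈ ℝ, and ψ : D → ℝ a convex function with ψ(x) = c for all x in the boundary of D and with Stp(ψ) ≤ M for some finite M ≥ 0. Let p ∈ ℝ satisfy c − p > M·r, where r = sup{‖x − a‖ : x ∈ bdry D}. Then the graph G = {(x, ψ(x)) : x ∈ D} (and hence its convex hull) is contained in the truncated cone trunc((a, p), T), where T = {(x, c) : x ∈ D}. -/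
/-!
Every `x ∈ D` lies on a segment `[a, y]` with `y ∈ frontier D`, say `x = s • a + (1 - s) • y`
(the ray from `a` through `x` leaves the bounded set `D`, so by connectedness it meets
`frontier D` beyond `x`). The maximum principle on a chord through `x` gives `ψ x ≤ c`, and
the steepness bound at `y` gives `ψ x ≥ c - M s ‖a - y‖ ≥ c - s (c - p) = s p + (1 - s) c`.
So `(x, ψ x)` lies on the vertical segment from `s • (a, p) + (1 - s) • (y, c)` to `(x, c)`,
both of which are in the cone.
-/

open Set Bornology AffineMap

theorem IsPreconnected.inter_frontier_nonempty {X : Type*} [TopologicalSpace X] {s t : Set X}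
    (hs : IsPreconnected s) (hst : (s ∩ t).Nonempty) (hst' : (s \ t).Nonempty) :
    (s ∩ frontier t).Nonempty := by
  by_contra h
  have hcover : s ⊆ interior t ∪ (closure t)ᶜ := fun x hx => by
    by_cases hxt : x ∈ interior t
    · exact Or.inl hxt
    · exact Or.inr fun hcl => h ⟨x, hx, hcl, hxt⟩
  obtain ⟨x, -, hxt, hxt'⟩ := hs _ _ isOpen_interior isClosed_closure.isOpen_compl hcover
    (hst.mono fun x hx => ⟨hx.1, (hcover hx.1).resolve_right (· (subset_closure hx.2))⟩)
    (hst'.mono fun x hx => ⟨hx.1, (hcover hx.1).resolve_left (hx.2 <| interior_subset ·)⟩)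
  exact hxt' (subset_closure (interior_subset hxt))

variable {E : Type*} [NormedAddCommGroup E] [NormedSpace ℝ E] {D : Set E}

theorem Bornology.IsBounded.exists_wbtw_notMem (hD : IsBounded D) {u x : E}
    (hux : u ≠ x) : ∃ w ∉ D, Wbtw ℝ u x w := by
  obtain ⟨R, hR⟩ := hD.subset_closedBall u
  have hd : 0 < dist u x := dist_pos.2 hux
  set T := (|R| + 1) / dist u x + 1
  refine ⟨lineMap u x T, fun hw => ?_,
    wbtw_iff_left_eq_or_right_mem_image_Ici.2 (.inr ⟨T, ?_, rfl⟩)⟩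
  · have := hR hw
    rw [Metric.mem_closedBall, dist_lineMap_left, Real.norm_eq_abs,
      abs_of_pos (by positivity)] at this
    have : T * dist u x = |R| + 1 + dist u x := by simp only [T]; field_simp
    linarith [le_abs_self R]
  · simp only [T, mem_Ici, le_add_iff_nonneg_left]; positivity

theorem Bornology.IsBounded.exists_mem_frontier_wbtw_of_ne (hD : IsBounded D) {u x : E}
    (hx : x ∈ D) (hux : u ≠ x) : ∃ z ∈ frontier D, Wbtw ℝ u x z := by
  obtain ⟨w, hw, huxw⟩ := hD.exists_wbtw_notMem hux
  obtain ⟨z, hxzw, hz⟩ := (convex_segment x w).isPreconnected.inter_frontier_nonempty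
    ⟨x, left_mem_segment ℝ x w, hx⟩ ⟨w, right_mem_segment ℝ x w, hw⟩
  exact ⟨z, hz, huxw.trans_right_left (mem_segment_iff_wbtw.1 hxzw)⟩

theorem Bornology.IsBounded.exists_mem_frontier_wbtw [Nontrivial E] (hD : IsBounded D)
    {x : E} (hx : x ∈ D) (u : E) : ∃ z ∈ frontier D, Wbtw ℝ u x z := by
  by_cases hux : u = x
  · obtain ⟨v, hvx⟩ := exists_ne x
    obtain ⟨z, hz, -⟩ := hD.exists_mem_frontier_wbtw_of_ne hx hvx
    exact ⟨z, hz, hux ▸ wbtw_self_left ℝ u z⟩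
  · exact hD.exists_mem_frontier_wbtw_of_ne hx hux

theorem ConvexOn.le_of_forall_frontier_le [Nontrivial E] {ψ : E → ℝ} {c : ℝ}
    (hD : IsCompact D) (hψ : ConvexOn ℝ D ψ) (h : ∀ y ∈ frontier D, ψ y ≤ c) {x : E}
    (hx : x ∈ D) : ψ x ≤ c := by
  obtain ⟨y, hy, -⟩ := hD.isBounded.exists_mem_frontier_wbtw hx x
  obtain ⟨z, hz, hyxz⟩ := hD.isBounded.exists_mem_frontier_wbtw hx y
  have hfr := hD.isClosed.frontier_subset
  calc ψ x ≤ max (ψ y) (ψ z) := hψ.le_max_of_mem_segment (hfr hy) (hfr hz) hyxz.mem_segment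
    _ ≤ c := max_le (h y hy) (h z hz)

theorem Prod.mk_mem_convexHull_singleton_union_image {F : Type*} [AddCommGroup F] [Module ℝ F]
    {T : Set F} {a x y : F} {p c h s t : ℝ} (hx : x ∈ T) (hy : y ∈ T) (hs : 0 ≤ s) (ht : 0 ≤ t)
    (hst : s + t = 1) (hxay : s • a + t • y = x) (hlow : s * p + t * c ≤ h) (hup : h ≤ c) :
    (x, h) ∈ convexHull ℝ ({(a, p)} ∪ (fun x => (x, c)) '' T) := by
  set K := convexHull ℝ ({(a, p)} ∪ (fun x => (x, c)) '' T)
  have hK : Convex ℝ K := convex_convexHull ℝ _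
  have hbase : (x, s * p + t * c) ∈ K := by
    have := hK (subset_convexHull ℝ _ (.inl rfl)) (subset_convexHull ℝ _ (.inr ⟨y, hy, rfl⟩))
      hs ht hst
    simpa [hxay] using this
  have htop : (x, c) ∈ K := subset_convexHull ℝ _ (.inr ⟨x, hx, rfl⟩)
  refine hK.segment_subset hbase htop ?_
  rw [← Prod.image_mk_segment_right, segment_eq_Icc (hlow.trans hup)]
  exact ⟨h, ⟨hlow, hup⟩, rfl⟩

theorem statement_16_general (n : ℕ) (hn : 1 ≤ n)
    (D : Set (EuclideanSpace ℝ (Fin n)))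
    (hDcpt : IsCompact D)
    (a : EuclideanSpace ℝ (Fin n))
    (c : ℝ)
    (ψ : EuclideanSpace ℝ (Fin n) → ℝ) (hψ_conv : ConvexOn ℝ D ψ)
    (hconst : ∀ x ∈ frontier D, ψ x = c)
    (M : ℝ) (hM : 0 ≤ M) (hstp : ∀ u ∈ D, ∀ v ∈ D, |ψ v - ψ u| ≤ M * ‖v - u‖)
    (r : ℝ) (hr : r = sSup ((fun x => ‖x - a‖) '' frontier D))
    (p : ℝ) (hp : M * r < c - p) :
    {z : EuclideanSpace ℝ (Fin n) × ℝ | ∃ x ∈ D, z = (x, ψ x)} ⊆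
        convexHull ℝ ({((a, p) : EuclideanSpace ℝ (Fin n) × ℝ)} ∪ ((fun x => (x, c)) '' D)) ∧
      convexHull ℝ {z : EuclideanSpace ℝ (Fin n) × ℝ | ∃ x ∈ D, z = (x, ψ x)} ⊆
        convexHull ℝ ({((a, p) : EuclideanSpace ℝ (Fin n) × ℝ)} ∪ ((fun x => (x, c)) '' D)) := by
  have : NeZero n := ⟨by omega⟩
  have hfr : frontier D ⊆ D := hDcpt.isClosed.frontier_subset
  have hdist_le_r : ∀ y ∈ frontier D, ‖a - y‖ ≤ r := fun y hy => by
    rw [norm_sub_rev, hr]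
    exact le_csSup ((hDcpt.of_isClosed_subset isClosed_frontier hfr).image
      (by fun_prop)).bddAbove ⟨y, hy, rfl⟩
  have hgraph : ∀ x ∈ D, (x, ψ x) ∈ convexHull ℝ ({(a, p)} ∪ (fun x => (x, c)) '' D) := by
    intro x hx
    obtain ⟨y, hy, hayx⟩ := hDcpt.isBounded.exists_mem_frontier_wbtw hx a
    obtain ⟨s, t, hs, ht, hst, rfl⟩ := hayx.mem_segment
    refine Prod.mk_mem_convexHull_singleton_union_image hx (hfr hy) hs ht hst rfl ?_
      (hψ_conv.le_of_forall_frontier_le hDcpt (fun y hy => (hconst y hy).le) hx)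
    obtain rfl : t = 1 - s := by linarith
    have hxy : s • a + (1 - s) • y - y = s • (a - y) := by module
    calc s * p + (1 - s) * c = c - s * (c - p) := by ring
      _ ≤ c - s * (M * ‖a - y‖) := by
        gcongr; exact (mul_le_mul_of_nonneg_left (hdist_le_r y hy) hM).trans hp.le
      _ = ψ y - M * ‖s • a + (1 - s) • y - y‖ := by
        rw [hconst y hy, hxy, norm_smul, Real.norm_of_nonneg hs]; ring
      _ ≤ ψ (s • a + (1 - s) • y) := by linarith [(abs_le.1 (hstp y (hfr hy) _ hx)).1]
  refine ⟨?_, convexHull_min ?_ (convex_convexHull ℝ _)⟩ <;>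
    rintro _ ⟨x, hx, rfl⟩ <;> exact hgraph x hx

/-- the graph of ψ (and hence its convex hull) is contained in the truncated cone trunc((a,p), T). -/
theorem statement_16 (n : ℕ) (hn : 1 ≤ n)
    (D : Set (EuclideanSpace ℝ (Fin n)))
    (hDcpt : IsCompact D) (hDconv : Convex ℝ D)
    (a : EuclideanSpace ℝ (Fin n)) (ha : a ∈ interior D)
    (c : ℝ)
    (ψ : EuclideanSpace ℝ (Fin n) → ℝ) (hψ_conv : ConvexOn ℝ D ψ)
    (hconst : ∀ x ∈ frontier D, ψ x = c)
    (M : ℝ) (hM : 0 ≤ M) (hstp : ∀ u ∈ D, ∀ v ∈ D, |ψ v - ψ u| ≤ M * ‖v - u‖)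
    (r : ℝ) (hr : r = sSup ((fun x => ‖x - a‖) '' frontier D))
    (p : ℝ) (hp : M * r < c - p) :
    {z : EuclideanSpace ℝ (Fin n) × ℝ | ∃ x ∈ D, z = (x, ψ x)} ⊆
        convexHull ℝ ({((a, p) : EuclideanSpace ℝ (Fin n) × ℝ)} ∪ ((fun x => (x, c)) '' D)) ∧
      convexHull ℝ {z : EuclideanSpace ℝ (Fin n) × ℝ | ∃ x ∈ D, z = (x, ψ x)} ⊆
        convexHull ℝ ({((a, p) : EuclideanSpace ℝ (Fin n) × ℝ)} ∪ ((fun x => (x, c)) '' D)) :=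
  statement_16_general n hn D hDcpt a c ψ hψ_conv hconst M hM hstp r hr p hp
end
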